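/- arXiv:1402.4107 — 4 statements merged into one kernel-verified Lean document; each statement's English description precedes it below -/
import Mathlib

section
/- Let b > 0 be a real constant. There exists R > 0 such that for every complex number w with Re(w) > 0 and |w| = r ≥ R, the equation λ + b·log λ − w = 0 (with the principal branch of log, arg λ ∈ (−π, π)) has exactly one solution λ in the open disk |λ − w| < r/2. -/
/-!
A solution of `λ + b log λ = w` is a fixed point of `g λ = w - b log λ`. Write `r = |w|`.
Since `Re w > 0`, the closed disk `|λ - w| ≤ r/2` avoids the cut `(-∞, 0]`, and on it
`r/2 ≤ |λ| ≤ 3r/2`. Hence `|b log λ| ≤ b (log (3r/2) + π) < r/2` for large `r`, so `g` maps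
the closed disk into the open one, and `|(log)'| ≤ 2/r` makes `g` a `2b/r`-Lipschitz map,
a contraction once `r ≥ 4b`. The Banach fixed point theorem gives exactly one solution.
-/

open Complex Metric Filter Set Function Asymptotics

theorem LipschitzOnWith.existsUnique_isFixedPt {α : Type*} [MetricSpace α] {f : α → α}
    {s : Set α} {K : NNReal} (hsc : IsComplete s) (hne : s.Nonempty) (hsf : MapsTo f s s)
    (hK : K < 1) (hf : LipschitzOnWith K f s) : ∃! x, x ∈ s ∧ IsFixedPt f x := by
  obtain ⟨x₀, hx₀⟩ := hne
  obtain ⟨x, hxs, hx, -⟩ :=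
    ContractingWith.exists_fixedPoint' hsc hsf ⟨hK, hf.mapsToRestrict hsf⟩ hx₀ (edist_ne_top _ _)
  refine ⟨x, ⟨hxs, hx⟩, fun y ⟨hys, hy⟩ => dist_le_zero.1 ?_⟩
  have := hf.dist_le_mul y hys x hxs
  rw [hy.eq, hx.eq] at this
  nlinarith [dist_nonneg (x := y) (y := x), show (K : ℝ) < 1 from hK]

theorem norm_mem_Icc_of_mem_closedBall_half {E : Type*} [SeminormedAddCommGroup E] {w z : E}
    (hz : z ∈ closedBall w (‖w‖ / 2)) : ‖w‖ / 2 ≤ ‖z‖ ∧ ‖z‖ ≤ 3 * ‖w‖ / 2 := by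
  have := abs_le.1 ((abs_norm_sub_norm_le z w).trans (mem_closedBall_iff_norm.1 hz))
  constructor <;> linarith

namespace Complex

theorem mem_slitPlane_of_norm_sub_lt {w z : ℂ} (hw : 0 < w.re) (h : ‖z - w‖ < ‖w‖) :
    z ∈ slitPlane := by
  by_contra! hz
  rw [mem_slitPlane_iff, not_or, not_lt, not_not] at hz
  have : ‖w‖ ^ 2 ≤ ‖z - w‖ ^ 2 := by
    rw [Complex.sq_norm, Complex.sq_norm, normSq_apply, normSq_apply, sub_re, sub_im, hz.2]
    nlinarith [hz.1]
  nlinarith [norm_nonneg w, norm_nonneg (z - w)]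

theorem norm_log_le_log_add_pi {z : ℂ} {M : ℝ} (hz : 1 ≤ ‖z‖) (hM : ‖z‖ ≤ M) :
    ‖log z‖ ≤ Real.log M + Real.pi :=
  calc ‖log z‖ ≤ |(log z).re| + |(log z).im| := norm_le_abs_re_add_abs_im _
  _ ≤ Real.log M + Real.pi := by
    rw [log_re, log_im, abs_of_nonneg (Real.log_nonneg hz)]
    gcongr
    exact abs_arg_le_pi z

theorem lipschitzOnWith_log {s : Set ℂ} (hs : Convex ℝ s) (hslit : s ⊆ slitPlane) {m : ℝ}
    (hm : 0 < m) (hmin : ∀ z ∈ s, m ≤ ‖z‖) : LipschitzOnWith (Real.toNNReal m⁻¹) log s := by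
  refine hs.lipschitzOnWith_of_nnnorm_hasDerivWithin_le
    (fun z hz => (hasDerivAt_log (hslit hz)).hasDerivWithinAt) fun z hz => ?_
  rw [← NNReal.coe_le_coe, coe_nnnorm, Real.coe_toNNReal _ (inv_nonneg.2 hm.le), norm_inv]
  exact inv_anti₀ hm (hmin z hz)

end Complex

theorem eventually_mul_log_add_lt (a c : ℝ) : ∀ᶠ x in atTop, a * (Real.log x + c) < x := by
  have := ((Real.isLittleO_log_id_atTop.add (isLittleO_const_id_atTop c)).const_mul_left a).def
    one_half_pos
  filter_upwards [this, eventually_gt_atTop 0] with x hx hx0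
  rw [Real.norm_eq_abs, Real.norm_eq_abs, id, abs_of_pos hx0] at hx
  linarith [le_abs_self (a * (Real.log x + c))]

theorem existsUnique_add_mul_log_sub_eq_zero {b : ℝ} (hb : 0 ≤ b) {w : ℂ} (hw : 0 < w.re)
    (h2 : 2 ≤ ‖w‖) (h4b : 4 * b ≤ ‖w‖)
    (hlog : b * (Real.log (3 * ‖w‖ / 2) + Real.pi) < ‖w‖ / 2) :
    ∃! l : ℂ, ‖l - w‖ < ‖w‖ / 2 ∧ l + b * log l - w = 0 := by
  set r := ‖w‖
  set S := closedBall w (r / 2)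
  set g : ℂ → ℂ := fun z => w - b * log z
  have hnorm : ∀ z ∈ S, r / 2 ≤ ‖z‖ ∧ ‖z‖ ≤ 3 * r / 2 :=
    fun z hz => norm_mem_Icc_of_mem_closedBall_half hz
  have hslit : S ⊆ slitPlane := fun z hz =>
    mem_slitPlane_of_norm_sub_lt hw (by linarith [mem_closedBall_iff_norm.1 hz, norm_nonneg w])
  have hsmall : ∀ z ∈ S, ‖g z - w‖ < r / 2 := fun z hz =>
    calc ‖g z - w‖ = b * ‖log z‖ := by
          simp [g, Complex.norm_real, Real.norm_eq_abs, abs_of_nonneg hb]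
    _ ≤ b * (Real.log (3 * r / 2) + Real.pi) := by
          gcongr
          exact norm_log_le_log_add_pi (by linarith [(hnorm z hz).1]) (hnorm z hz).2
    _ < r / 2 := hlog
  have hmaps : MapsTo g S S := fun z hz => mem_closedBall_iff_norm.2 (hsmall z hz).le
  have hlip : LipschitzOnWith (1 / 2) g S := by
    have hlog_lip := lipschitzOnWith_log (convex_closedBall w (r / 2)) hslit (by linarith)
      fun z hz => (hnorm z hz).1
    refine LipschitzOnWith.of_dist_le_mul fun x hx y hy => ?_
    calc dist (g x) (g y) = b * dist (log x) (log y) := by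
          simp [g, dist_eq_norm, ← mul_sub, norm_sub_rev (log x), Complex.norm_real,
            Real.norm_eq_abs, abs_of_nonneg hb]
    _ ≤ b * ((r / 2)⁻¹ * dist x y) := by
          gcongr
          have := hlog_lip.dist_le_mul x hx y hy
          rwa [Real.coe_toNNReal _ (by positivity)] at this
    _ ≤ 1 / 2 * dist x y := by
          rw [← mul_assoc]
          gcongr
          rw [inv_div, mul_div_assoc', div_le_iff₀ (by linarith)]
          linarith
  have hfixed : ∀ l, l + b * log l - w = 0 ↔ IsFixedPt g l := fun l => by
    simp only [IsFixedPt, g]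
    constructor <;> intro h <;> linear_combination -h
  obtain ⟨l, ⟨hlS, hl⟩, huniq⟩ := hlip.existsUnique_isFixedPt isClosed_closedBall.isComplete
    ⟨w, mem_closedBall_self (by positivity)⟩ hmaps (by norm_num)
  refine ⟨l, ⟨?_, (hfixed l).2 hl⟩, fun y hy => huniq y ⟨?_, (hfixed y).1 hy.2⟩⟩
  · rw [← hl.eq]
    exact hsmall l hlS
  · exact mem_closedBall_iff_norm.2 hy.1.le

theorem stmt0 (b : ℝ) (hb : 0 < b) :
    ∃ R > (0:ℝ), ∀ w : ℂ, 0 < w.re → R ≤ ‖w‖ →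
      ∃! l : ℂ, ‖l - w‖ < ‖w‖ / 2 ∧
        l + (b : ℂ) * Complex.log l - w = 0 := by
  have hlarge : ∀ᶠ r in atTop,
      2 ≤ r ∧ 4 * b ≤ r ∧ b * (Real.log (3 * r / 2) + Real.pi) < r / 2 := by
    have hlog := (tendsto_id.const_mul_atTop (by norm_num : (0:ℝ) < 3 / 2)).eventually
      (eventually_mul_log_add_lt (3 * b) Real.pi)
    filter_upwards [eventually_ge_atTop 2, eventually_ge_atTop (4 * b), hlog] with r h2 h4b hlog
    refine ⟨h2, h4b, ?_⟩
    rw [id, ← mul_div_right_comm] at hlog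
    linarith
  obtain ⟨R, hR⟩ := eventually_atTop.1 hlarge
  refine ⟨max R 1, by positivity, fun w hw hwR => ?_⟩
  obtain ⟨h2, h4b, hlog⟩ := hR ‖w‖ (le_of_max_le_left hwR)
  exact existsUnique_add_mul_log_sub_eq_zero hb.le hw h2 h4b hlog
end

section
/- For every sufficiently large natural number n, the characteristic equation λ + n²e^{−λ} = 0 has a complex root λ_n with Re(λ_n) ≥ ln(n²) − ln ln(n²) − 1. In particular there is a sequence of roots whose real parts tend to +∞. -/
/-!
Write a root as `λ = x + iy`. On the curve `x = -y cot y`, `π/2 ≤ y < π`, one has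
`λ = -(y / sin y) e^{-iy}`, so `λ + a e^{-λ} = 0` with the real number `a = e^x y / sin y`,
which runs continuously from `π/2` (at `y = π/2`) to `+∞` (as `y → π`); the intermediate value
theorem yields a root with `x ≥ 0` and `π/2 ≤ y < π` for every `a ≥ π/2`.
For any root, taking absolute values gives `x + log |λ| = log a`. Once `x ≥ 2` we have
`|λ| ≤ x + π ≤ e x`, hence `log |λ| ≤ 1 + log x ≤ 1 + log log a`.
-/

open Real Set

noncomputable section

def rootCurve (y : ℝ) : ℂ := ⟨-y * cos y / sin y, y⟩

def rootParam (y : ℝ) : ℝ := exp (rootCurve y).re * (y / sin y)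

end

lemma rootCurve_add_rootParam_mul_exp_neg {y : ℝ} (hy : sin y ≠ 0) :
    rootCurve y + rootParam y * Complex.exp (-rootCurve y) = 0 := by
  apply Complex.ext <;>
    simp only [rootParam, Complex.add_re, Complex.add_im, Complex.re_ofReal_mul,
      Complex.im_ofReal_mul, Complex.exp_re, Complex.exp_im, Complex.neg_re, Complex.neg_im,
      Real.exp_neg, cos_neg, sin_neg, Complex.zero_re, Complex.zero_im] <;>
    simp only [rootCurve] <;> field_simp <;> ring

lemma continuousOn_rootParam : ContinuousOn rootParam {y | sin y ≠ 0} := by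
  unfold rootParam rootCurve
  fun_prop (disch := exact fun _ hy => hy)

lemma rootParam_pi_div_two : rootParam (π / 2) = π / 2 := by
  simp [rootParam, rootCurve]

section

variable {y : ℝ} (hy : y ∈ Ico (π / 2) π)
include hy

lemma sin_pos_of_mem_Ico_pi_div_two_pi : 0 < sin y :=
  sin_pos_of_pos_of_lt_pi (by linarith [hy.1, pi_pos]) hy.2

lemma rootCurve_re_nonneg : 0 ≤ (rootCurve y).re := by
  have hcos : cos y ≤ 0 := cos_nonpos_of_pi_div_two_le_of_le hy.1 (by linarith [hy.2, pi_pos])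
  have hy0 : 0 ≤ y := by linarith [hy.1, pi_pos]
  exact div_nonneg (by nlinarith) (sin_pos_of_mem_Ico_pi_div_two_pi hy).le

lemma div_sin_le_rootParam : y / sin y ≤ rootParam y :=
  le_mul_of_one_le_left
    (div_nonneg (by linarith [hy.1, pi_pos]) (sin_pos_of_mem_Ico_pi_div_two_pi hy).le)
    (one_le_exp (rootCurve_re_nonneg hy))

end

lemma exists_rootParam_eq {a : ℝ} (ha : π / 2 ≤ a) : ∃ y ∈ Ico (π / 2) π, rootParam y = a := by
  have ha0 : 0 < a := by linarith [pi_pos]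
  set ε := π / (2 * a) with hε
  have hε0 : 0 < ε := by positivity
  have hεa : a * ε = π / 2 := by rw [hε]; field_simp
  have hε_le : ε ≤ π / 2 := by nlinarith [pi_gt_three]
  have hb : π - ε ∈ Ico (π / 2) π := ⟨by linarith, by linarith⟩
  have hab : a ≤ rootParam (π - ε) := by
    have hsin : sin (π - ε) ≤ ε := (sin_pi_sub ε).trans_le (sin_le hε0.le)
    have hsin0 := sin_pos_of_mem_Ico_pi_div_two_pi hb
    refine le_trans ?_ (div_sin_le_rootParam hb)
    rw [le_div_iff₀ hsin0]
    nlinarith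
  have hcont : ContinuousOn rootParam (Icc (π / 2) (π - ε)) :=
    continuousOn_rootParam.mono fun y hy =>
      (sin_pos_of_mem_Ico_pi_div_two_pi ⟨hy.1, hy.2.trans_lt hb.2⟩).ne'
  obtain ⟨y, hy, hya⟩ := intermediate_value_Icc hb.1 hcont ⟨by rwa [rootParam_pi_div_two], hab⟩
  exact ⟨y, ⟨hy.1, hy.2.trans_lt hb.2⟩, hya⟩

lemma exists_add_mul_exp_neg_eq_zero {a : ℝ} (ha : π / 2 ≤ a) :
    ∃ z : ℂ, z + a * Complex.exp (-z) = 0 ∧ 0 ≤ z.re ∧ z.im ∈ Ico (π / 2) π := by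
  obtain ⟨y, hy, rfl⟩ := exists_rootParam_eq ha
  exact ⟨rootCurve y, rootCurve_add_rootParam_mul_exp_neg (sin_pos_of_mem_Ico_pi_div_two_pi hy).ne',
    rootCurve_re_nonneg hy, hy⟩

lemma re_add_log_norm_eq_log {z : ℂ} {a : ℝ} (ha : 0 < a) (h : z + a * Complex.exp (-z) = 0) :
    z.re + log ‖z‖ = log a := by
  have hnorm : ‖z‖ = a * exp (-z.re) := by
    rw [← norm_neg, add_eq_zero_iff_neg_eq.1 h, norm_mul, Complex.norm_real,
      norm_of_nonneg ha.le, Complex.norm_exp, Complex.neg_re]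
  rw [hnorm, log_mul ha.ne' (exp_ne_zero _), log_exp]
  ring

lemma sub_log_sub_one_le_re {z : ℂ} {L : ℝ} (hL : z.re + log ‖z‖ = L) (hL7 : 7 ≤ L)
    (hre : 0 ≤ z.re) (him : |z.im| ≤ π) (hz : 1 ≤ ‖z‖) : L - log L - 1 ≤ z.re := by
  have hnorm : ‖z‖ ≤ z.re + π :=
    (Complex.norm_le_abs_re_add_abs_im z).trans (by rw [abs_of_nonneg hre]; linarith)
  have hre2 : 2 ≤ z.re := by
    by_contra h
    linarith [log_le_sub_one_of_pos (by linarith : 0 < ‖z‖), pi_lt_d2]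
  have hnorm_le : ‖z‖ ≤ exp 1 * z.re := by nlinarith [exp_one_gt_d9, pi_lt_d2]
  have hlog : log ‖z‖ ≤ 1 + log z.re :=
    calc log ‖z‖ ≤ log (exp 1 * z.re) := log_le_log (by linarith) hnorm_le
      _ = 1 + log z.re := by rw [log_mul (exp_ne_zero 1) (by positivity), log_exp]
  have hlogL : log z.re ≤ log L := log_le_log (by linarith) (by linarith [log_nonneg hz])
  linarith

lemma exp_seven_le_ten_thousand : exp 7 ≤ 10000 :=
  calc exp 7 = exp 1 ^ 7 := by rw [← exp_nat_mul]; norm_num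
    _ ≤ 3 ^ 7 := by gcongr; linarith [exp_one_lt_d9]
    _ ≤ 10000 := by norm_num

theorem stmt1 :
    ∃ N : ℕ, ∀ n : ℕ, N ≤ n →
      ∃ l : ℂ, l + (n : ℂ)^2 * Complex.exp (-l) = 0 ∧
        Real.log ((n : ℝ)^2) - Real.log (Real.log ((n : ℝ)^2)) - 1 ≤ l.re := by
  refine ⟨100, fun n hn => ?_⟩
  have hn2 : (10000 : ℝ) ≤ (n : ℝ) ^ 2 := by
    have : (100 : ℝ) ≤ n := by exact_mod_cast hn
    nlinarith
  obtain ⟨z, hz, hre, him⟩ := exists_add_mul_exp_neg_eq_zero (a := (n : ℝ) ^ 2) (by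
    linarith [pi_lt_d2])
  have hz' : z + (n : ℂ) ^ 2 * Complex.exp (-z) = 0 := by exact_mod_cast hz
  have him_abs : |z.im| = z.im := abs_of_nonneg (by linarith [him.1, pi_pos])
  refine ⟨z, hz', sub_log_sub_one_le_re (re_add_log_norm_eq_log (by positivity) hz) ?_ hre
    (by rw [him_abs]; exact him.2.le) ?_⟩
  · rw [le_log_iff_exp_le (by positivity)]
    linarith [exp_seven_le_ten_thousand]
  · linarith [Complex.abs_im_le_norm z, him.1, pi_gt_three]
end

section
/- For every sufficiently large natural number n, the equation λ² + n²e^{−λ} = 0 has a complex root λ_n with Re(λ_n) → +∞ as n → ∞; more precisely, there exist roots λ_n = x_n + i y_n with x_n ∼ 2(ln(n/2) − ln ln(n/2)) as n → ∞. -/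
/-!
Write a candidate root as `λ = r e^{iθ}` with `θ ∈ (0, π/2]`. If `Im λ = π - 2θ`, then
`e^{-λ} = -e^{-Re λ} e^{2iθ}` points opposite to `λ² = r² e^{2iθ}`, so `λ` is a root as soon as
`r² e^{Re λ} = n²`; as `θ` runs over `(0, π/2]` the left side takes every value in `[0, ∞)`.

Conversely, taking moduli in `λ² = -n² e^{-λ}` gives `|λ|² e^{Re λ} = n²`, i.e.
`2 log n = Re λ + log |λ|²`. When `Re λ ≥ 0` and `Im λ` stays bounded, this forces
`Re λ → ∞`, after which `log |λ|² = O(log Re λ) = o(Re λ)`. Hence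
`Re λ ~ 2 log n ~ 2 (log (n/2) - log log (n/2))`.
-/

open Real Filter Asymptotics Set

theorem sq_add_mul_exp_neg_eq_zero_of_im_eq {z : ℂ} {r θ : ℝ}
    (hz : z = r * Complex.exp (θ * Complex.I)) (him : z.im = π - 2 * θ) :
    z ^ 2 + ((r ^ 2 * Real.exp z.re : ℝ) : ℂ) * Complex.exp (-z) = 0 := by
  have hexp : Complex.exp (-z) =
      -Complex.exp (-z.re) * Complex.exp (θ * Complex.I) * Complex.exp (θ * Complex.I) := by
    have harg : -z = -z.re + θ * Complex.I + θ * Complex.I - π * Complex.I := by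
      conv_lhs => rw [← Complex.re_add_im z, him]
      push_cast; ring
    rw [harg, Complex.exp_sub, Complex.exp_add, Complex.exp_add, Complex.exp_pi_mul_I]
    ring
  have hcancel : Complex.exp z.re * Complex.exp (-z.re) = 1 := by
    rw [← Complex.exp_add, add_neg_cancel, Complex.exp_zero]
  have hsq : z ^ 2 = r ^ 2 * Complex.exp (θ * Complex.I) ^ 2 := by rw [hz]; ring
  rw [hexp, hsq]
  push_cast
  linear_combination (-(r : ℂ) ^ 2 * Complex.exp (θ * Complex.I) ^ 2) * hcancel

theorem norm_sq_mul_exp_re_eq {z c : ℂ} (h : z ^ 2 + c * Complex.exp (-z) = 0) :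
    ‖z‖ ^ 2 * Real.exp z.re = ‖c‖ := by
  have hsq : ‖z‖ ^ 2 = ‖c‖ * Real.exp (-z.re) := by
    rw [← norm_pow, eq_neg_of_add_eq_zero_left h, norm_neg, norm_mul, Complex.norm_exp,
      Complex.neg_re]
  rw [hsq, mul_assoc, ← Real.exp_add, neg_add_cancel, Real.exp_zero, mul_one]

/-- The modulus `r` for which `r e^{iθ}` has imaginary part `π - 2θ`. -/
noncomputable def rootRadius (θ : ℝ) : ℝ := (π - 2 * θ) / Real.sin θ

theorem rootRadius_pi_div_two : rootRadius (π / 2) = 0 := by simp [rootRadius]; ring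

theorem rootRadius_nonneg {θ : ℝ} (h0 : 0 < θ) (hθ : θ ≤ π / 2) : 0 ≤ rootRadius θ :=
  div_nonneg (by linarith) (Real.sin_nonneg_of_nonneg_of_le_pi h0.le (by linarith [pi_pos]))

theorem rootRadius_mul_sin {θ : ℝ} (h0 : 0 < θ) (hπ : θ < π) :
    rootRadius θ * Real.sin θ = π - 2 * θ :=
  div_mul_cancel₀ _ (Real.sin_pos_of_pos_of_lt_pi h0 hπ).ne'

theorem pi_div_two_mul_le_rootRadius {θ : ℝ} (h0 : 0 < θ) (hθ : θ ≤ π / 4) :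
    π / (2 * θ) ≤ rootRadius θ := by
  rw [rootRadius, ← div_div]
  exact div_le_div₀ (by linarith [pi_pos]) (by linarith)
    (Real.sin_pos_of_pos_of_lt_pi h0 (by linarith [pi_pos])) (Real.sin_le h0.le)

theorem continuousOn_rootRadius : ContinuousOn rootRadius (Ioo 0 π) :=
  (continuousOn_const.sub (continuousOn_const.mul continuousOn_id)).div
    Real.continuous_sin.continuousOn fun _ hθ => (Real.sin_pos_of_pos_of_lt_pi hθ.1 hθ.2).ne'

theorem exists_rootRadius_sq_mul_exp_eq {c : ℝ} (hc : 0 ≤ c) :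
    ∃ θ ∈ Ioc 0 (π / 2), rootRadius θ ^ 2 * Real.exp (rootRadius θ * Real.cos θ) = c := by
  have hπ := pi_pos
  set a := π / (4 * (c + 1)) with ha_def
  have ha0 : 0 < a := by positivity
  have ha : a ≤ π / 4 := div_le_div_of_nonneg_left hπ.le (by norm_num) (by linarith)
  have hrad : 2 * (c + 1) ≤ rootRadius a := by
    convert pi_div_two_mul_le_rootRadius ha0 ha using 1
    rw [ha_def]; field_simp; norm_num
  have hexp : 1 ≤ Real.exp (rootRadius a * Real.cos a) :=
    Real.one_le_exp (mul_nonneg (by linarith)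
      (Real.cos_nonneg_of_mem_Icc ⟨by linarith, by linarith⟩))
  have hca : c ≤ rootRadius a ^ 2 * Real.exp (rootRadius a * Real.cos a) := by
    nlinarith
  have hcont : ContinuousOn (fun θ => rootRadius θ ^ 2 * Real.exp (rootRadius θ * Real.cos θ))
      (Icc a (π / 2)) := by
    have hr := continuousOn_rootRadius.mono
      (Icc_subset_Ioo ha0 (by linarith : π / 2 < π))
    exact (hr.pow 2).mul (Real.continuous_exp.comp_continuousOn
      (hr.mul Real.continuous_cos.continuousOn))
  obtain ⟨θ, hθ, hθc⟩ := intermediate_value_Icc' (ha.trans (by linarith)) hcont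
    ⟨by simpa [rootRadius_pi_div_two] using hc, hca⟩
  exact ⟨θ, ⟨ha0.trans_le hθ.1, hθ.2⟩, hθc⟩

theorem exists_root_of_nonneg {c : ℝ} (hc : 0 ≤ c) :
    ∃ z : ℂ, z ^ 2 + c * Complex.exp (-z) = 0 ∧ 0 ≤ z.re ∧ z.im ∈ Ico 0 π := by
  obtain ⟨θ, ⟨hθ0, hθ⟩, hθc⟩ := exists_rootRadius_sq_mul_exp_eq hc
  have hθπ : θ < π := by linarith [pi_pos]
  set z : ℂ := rootRadius θ * Complex.exp (θ * Complex.I) with hz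
  have hre : z.re = rootRadius θ * Real.cos θ := by
    rw [hz, Complex.re_ofReal_mul, Complex.exp_ofReal_mul_I_re]
  have him : z.im = π - 2 * θ := by
    rw [hz, Complex.im_ofReal_mul, Complex.exp_ofReal_mul_I_im, rootRadius_mul_sin hθ0 hθπ]
  refine ⟨z, ?_, ?_, ?_⟩
  · simpa [hre, hθc] using sq_add_mul_exp_neg_eq_zero_of_im_eq hz him
  · rw [hre]
    exact mul_nonneg (rootRadius_nonneg hθ0 hθ) (Real.cos_nonneg_of_mem_Icc ⟨by linarith, hθ⟩)
  · rw [him]; constructor <;> linarith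

section RealSequences

variable {x y : ℕ → ℝ} {C : ℝ}

theorem tendsto_atTop_of_sq_add_sq_mul_exp_eq (hx : ∀ᶠ n in atTop, 0 ≤ x n)
    (hy : ∀ᶠ n in atTop, |y n| ≤ C)
    (h : ∀ᶠ n in atTop, (x n ^ 2 + y n ^ 2) * Real.exp (x n) = (n : ℝ) ^ 2) :
    Tendsto x atTop atTop := by
  refine tendsto_atTop_mono' _ ?_ (tendsto_atTop_add_const_right _ (-(Real.log (2 + C ^ 2) / 2))
    (tendsto_log_atTop.comp tendsto_natCast_atTop_atTop))
  filter_upwards [hx, hy, h, eventually_gt_atTop 0] with n hxn hyn hn hn0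
  have hbound : (n : ℝ) ^ 2 ≤ (2 + C ^ 2) * Real.exp (x n) ^ 2 := by
    have hx2 : x n ^ 2 ≤ 2 * Real.exp (x n) := by
      nlinarith [Real.quadratic_le_exp_of_nonneg hxn]
    have hy2 : y n ^ 2 ≤ C ^ 2 * Real.exp (x n) := by
      nlinarith [sq_le_sq' (abs_le.mp hyn).1 (abs_le.mp hyn).2, Real.one_le_exp hxn, sq_nonneg C]
    rw [← hn]
    nlinarith [Real.exp_pos (x n)]
  have hlog := Real.log_le_log (by positivity) hbound
  rw [Real.log_pow, Real.log_mul (by positivity) (by positivity), Real.log_pow,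
    Real.log_exp] at hlog
  simp only [Function.comp_apply]
  push_cast at hlog
  linarith

theorem isEquivalent_two_mul_log_of_sq_add_sq_mul_exp_eq (hx : ∀ᶠ n in atTop, 0 ≤ x n)
    (hy : ∀ᶠ n in atTop, |y n| ≤ C)
    (h : ∀ᶠ n in atTop, (x n ^ 2 + y n ^ 2) * Real.exp (x n) = (n : ℝ) ^ 2) :
    x ~[atTop] fun n : ℕ => 2 * Real.log n := by
  have hxtop := tendsto_atTop_of_sq_add_sq_mul_exp_eq hx hy h
  have hlog : (fun n => Real.log (x n ^ 2 + y n ^ 2)) =ᶠ[atTop]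
      (fun n : ℕ => 2 * Real.log n) - x := by
    filter_upwards [h, hxtop.eventually_ge_atTop 1] with n hn hxn
    have hlog_sq : Real.log ((n : ℝ) ^ 2) = 2 * Real.log n := by
      rw [Real.log_pow]; push_cast; ring
    rw [Pi.sub_apply, ← hlog_sq, ← hn, Real.log_mul (by positivity) (Real.exp_ne_zero _),
      Real.log_exp, add_sub_cancel_right]
  have hbig : (fun n => Real.log (x n ^ 2 + y n ^ 2)) =O[atTop] fun n => Real.log (x n) := by
    refine IsBigO.of_bound 3 ?_
    filter_upwards [hy, hxtop.eventually_ge_atTop 2, hxtop.eventually_ge_atTop C]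
      with n hyn hx2 hxC
    have hy2 : y n ^ 2 ≤ x n ^ 2 :=
      sq_le_sq' (by linarith [(abs_le.mp hyn).1]) (by linarith [(abs_le.mp hyn).2])
    have hpos : 1 ≤ x n ^ 2 + y n ^ 2 := by nlinarith
    rw [Real.norm_of_nonneg (Real.log_nonneg hpos),
      Real.norm_of_nonneg (Real.log_nonneg (by linarith))]
    calc Real.log (x n ^ 2 + y n ^ 2) ≤ Real.log (x n ^ 3) :=
          Real.log_le_log (by positivity) (by nlinarith)
      _ = 3 * Real.log (x n) := by rw [Real.log_pow]; norm_num
  exact (IsLittleO.isEquivalent ((hbig.trans_isLittleO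
    (isLittleO_log_id_atTop.comp_tendsto hxtop)).congr' hlog EventuallyEq.rfl)).symm

end RealSequences

theorem isEquivalent_two_mul_log_half_sub_log_log_half :
    (fun t : ℝ => 2 * (Real.log (t / 2) - Real.log (Real.log (t / 2)))) ~[atTop]
      fun t => 2 * Real.log t := by
  have hhalf : Tendsto (fun t : ℝ => t / 2) atTop atTop := tendsto_id.atTop_div_const two_pos
  have hloglog : (fun t => Real.log (Real.log (t / 2))) =o[atTop] fun t => Real.log (t / 2) :=
    isLittleO_log_id_atTop.comp_tendsto (tendsto_log_atTop.comp hhalf)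
  have hlog_half : (fun t => Real.log (t / 2)) ~[atTop] Real.log := by
    refine (IsEquivalent.refl.sub_isLittleO
      (isLittleO_const_log_atTop (c := Real.log 2))).congr_left ?_
    filter_upwards [eventually_gt_atTop 0] with t ht
    exact (Real.log_div ht.ne' two_ne_zero).symm
  exact IsEquivalent.refl.mul ((IsEquivalent.refl.sub_isLittleO hloglog).trans hlog_half)

theorem stmt2 :
    ∃ (N : ℕ) (lam : ℕ → ℂ),
      (∀ n : ℕ, N ≤ n → (lam n)^2 + (n : ℂ)^2 * Complex.exp (-(lam n)) = 0) ∧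
      Filter.Tendsto (fun n : ℕ => (lam n).re) Filter.atTop Filter.atTop ∧
      Filter.Tendsto
        (fun n : ℕ => (lam n).re /
          (2 * (Real.log ((n : ℝ)/2) - Real.log (Real.log ((n : ℝ)/2)))))
        Filter.atTop (nhds 1) := by
  choose lam hroot hre him using fun n : ℕ => exists_root_of_nonneg (sq_nonneg (n : ℝ))
  replace hroot (n : ℕ) : (lam n) ^ 2 + (n : ℂ) ^ 2 * Complex.exp (-(lam n)) = 0 := by
    exact_mod_cast hroot n
  have hre' : ∀ᶠ n in atTop, 0 ≤ (lam n).re := Eventually.of_forall hre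
  have him' : ∀ᶠ n in atTop, |(lam n).im| ≤ π :=
    Eventually.of_forall fun n => abs_le.mpr ⟨by linarith [(him n).1, pi_pos], (him n).2.le⟩
  have hmod : ∀ᶠ n : ℕ in atTop,
      ((lam n).re ^ 2 + (lam n).im ^ 2) * Real.exp (lam n).re = (n : ℝ) ^ 2 :=
    Eventually.of_forall fun n => by
      simpa [Complex.sq_norm, Complex.normSq_apply, ← sq] using norm_sq_mul_exp_re_eq (hroot n)
  have hlog := isEquivalent_two_mul_log_half_sub_log_log_half.comp_tendsto
    tendsto_natCast_atTop_atTop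
  have hlog_pos : ∀ᶠ n : ℕ in atTop, 0 < 2 * Real.log n :=
    ((tendsto_log_atTop.comp tendsto_natCast_atTop_atTop).eventually_gt_atTop 0).mono
      fun _ hn => mul_pos two_pos hn
  refine ⟨0, lam, fun n _ => hroot n,
    tendsto_atTop_of_sq_add_sq_mul_exp_eq hre' him' hmod, ?_⟩
  refine (isEquivalent_iff_tendsto_one ?_).mp
    ((isEquivalent_two_mul_log_of_sq_add_sq_mul_exp_eq hre' him' hmod).trans hlog.symm)
  exact (hlog.eventually_pos hlog_pos).mono fun _ hn => hn.ne'
end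

section
/- Define U_n(y) = Φ(n² sin y / (2y)) + (y cos y − √(y² − n² sin²y))/sin y for y where the expression is defined, where Φ is the inverse of x ↦ x e^x on positive reals. Suppose n is a sufficiently large integer with cos n > 1/4, sin n > 1/4, cos(n+1) < −1/4 and sin(n+1) > 1/4. Then U_n(n) > 0 and U_n(n+1) < 0, hence by continuity the equation U_n(y) = 0 has a solution y_n ∈ (n, n+1). -/
open Real Set

lemma idexp_lt {a b : ℝ} (ha : 0 < a) (hab : a < b) :
    a * Real.exp a < b * Real.exp b := by
  have h1 : Real.exp a < Real.exp b := Real.exp_lt_exp.2 hab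
  nlinarith [Real.exp_pos a, Real.exp_pos b]

lemma phi_mono (Φ : ℝ → ℝ)
    (hΦ : ∀ t : ℝ, 0 < t → 0 < Φ t ∧ Φ t * Real.exp (Φ t) = t) :
    StrictMonoOn Φ (Set.Ioi 0) := by
  intro s hs t ht hst
  by_contra h
  push_neg at h
  rcases eq_or_lt_of_le h with h' | h'
  · have := (hΦ s hs).2
    rw [← h'] at this
    rw [(hΦ t ht).2] at this
    exact absurd this (ne_of_gt hst)
  · have := idexp_lt (hΦ t ht).1 h'
    rw [(hΦ s hs).2, (hΦ t ht).2] at this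
    exact absurd this (not_lt.2 hst.le)

lemma phi_image (Φ : ℝ → ℝ)
    (hΦ : ∀ t : ℝ, 0 < t → 0 < Φ t ∧ Φ t * Real.exp (Φ t) = t) :
    Φ '' (Set.Ioi 0) = Set.Ioi 0 := by
  apply Set.Subset.antisymm
  · rintro _ ⟨t, ht, rfl⟩
    exact (hΦ t ht).1
  · rintro x hx
    have hx' : (0:ℝ) < x := hx
    have hxe : 0 < x * Real.exp x := mul_pos hx' (Real.exp_pos x)
    refine ⟨x * Real.exp x, hxe, ?_⟩
    have h1 := (hΦ _ hxe).1
    have h2 := (hΦ _ hxe).2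
    set u := Φ (x * Real.exp x) with hu
    rcases lt_trichotomy u x with h | h | h
    · have := idexp_lt h1 h; rw [h2] at this; linarith
    · exact h
    · have := idexp_lt hx' h; rw [h2] at this; linarith

lemma phi_contAt (Φ : ℝ → ℝ)
    (hΦ : ∀ t : ℝ, 0 < t → 0 < Φ t ∧ Φ t * Real.exp (Φ t) = t)
    {a : ℝ} (ha : 0 < a) : ContinuousAt Φ a := by
  apply (phi_mono Φ hΦ).continuousAt_of_image_mem_nhds (Ioi_mem_nhds ha)
  rw [phi_image Φ hΦ]
  exact Ioi_mem_nhds (hΦ a ha).1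

lemma phi_ub (Φ : ℝ → ℝ)
    (hΦ : ∀ t : ℝ, 0 < t → 0 < Φ t ∧ Φ t * Real.exp (Φ t) = t)
    {t : ℝ} (ht : 0 < t) : Φ t ≤ max 1 (Real.log t) := by
  rcases le_or_gt (Φ t) 1 with h | h
  · exact le_max_of_le_left h
  · have h1 := (hΦ t ht).1
    have h2 := (hΦ t ht).2
    have h3 : Real.exp (Φ t) ≤ t := by nlinarith [Real.exp_pos (Φ t)]
    exact le_max_of_le_right ((Real.le_log_iff_exp_le ht).2 h3)

lemma sin_pos_on {a : ℝ} (hs : 1/4 < Real.sin a) (hc : 1/4 < Real.cos a)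
    {y : ℝ} (hy : y ∈ Set.Icc a (a+1)) : 0 < Real.sin y := by
  obtain ⟨h1, h2⟩ := hy
  have hkey : y = a + (y - a) := by ring
  rw [hkey, Real.sin_add]
  have ht0 : 0 ≤ y - a := by linarith
  have ht1 : y - a ≤ 1 := by linarith
  have hc1 : Real.cos 1 ≤ Real.cos (y - a) :=
    Real.cos_le_cos_of_nonneg_of_le_pi ht0 (by linarith [Real.pi_gt_three]) ht1
  have hcp : 0 < Real.cos 1 := Real.cos_one_pos
  have hsp : 0 ≤ Real.sin (y - a) :=
    Real.sin_nonneg_of_nonneg_of_le_pi ht0 (by linarith [Real.pi_gt_three])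
  nlinarith

set_option maxHeartbeats 2000000 in
theorem stmt15 (Φ : ℝ → ℝ)
    (hΦ : ∀ t : ℝ, 0 < t → 0 < Φ t ∧ Φ t * Real.exp (Φ t) = t) :
    ∃ N : ℕ, ∀ n : ℕ, N ≤ n →
      1/4 < Real.cos n → 1/4 < Real.sin n →
      Real.cos ((n : ℝ) + 1) < -(1/4) → 1/4 < Real.sin ((n : ℝ) + 1) →
      (0 < Φ ((n : ℝ)^2 * Real.sin n / (2 * n)) +
          ((n : ℝ) * Real.cos n -
            Real.sqrt ((n : ℝ)^2 - (n : ℝ)^2 * Real.sin n ^ 2)) / Real.sin n) ∧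
      (Φ ((n : ℝ)^2 * Real.sin ((n : ℝ) + 1) / (2 * ((n : ℝ) + 1))) +
          (((n : ℝ) + 1) * Real.cos ((n : ℝ) + 1) -
            Real.sqrt (((n : ℝ) + 1)^2 - (n : ℝ)^2 * Real.sin ((n : ℝ) + 1) ^ 2)) /
            Real.sin ((n : ℝ) + 1) < 0) ∧
      ∃ y ∈ Set.Ioo (n : ℝ) ((n : ℝ) + 1),
        Φ ((n : ℝ)^2 * Real.sin y / (2 * y)) +
          (y * Real.cos y - Real.sqrt (y^2 - (n : ℝ)^2 * Real.sin y ^ 2)) / Real.sin y = 0 := by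
  use 289
  intro n hn hcos hsin hcos1 hsin1
  have hN : (289:ℝ) ≤ (n:ℝ) := by exact_mod_cast hn
  have hn0 : (0:ℝ) < (n:ℝ) := by linarith
  -- Part 1
  have harg : 0 < (n:ℝ)^2 * Real.sin n / (2 * n) := by
    apply div_pos (by nlinarith) (by linarith)
  have hsq : ((n:ℝ)^2 - (n:ℝ)^2 * Real.sin n ^ 2) = ((n:ℝ) * Real.cos n)^2 := by
    have := Real.sin_sq_add_cos_sq (n:ℝ)
    nlinarith
  have hsqrt : Real.sqrt ((n:ℝ)^2 - (n:ℝ)^2 * Real.sin n ^ 2) = (n:ℝ) * Real.cos n := by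
    rw [hsq, Real.sqrt_sq (by nlinarith)]
  have g1 : 0 < Φ ((n : ℝ)^2 * Real.sin n / (2 * n)) +
      ((n : ℝ) * Real.cos n -
        Real.sqrt ((n : ℝ)^2 - (n : ℝ)^2 * Real.sin n ^ 2)) / Real.sin n := by
    rw [hsqrt, sub_self, zero_div, add_zero]
    exact (hΦ _ harg).1
  -- Part 2
  have hr : Real.sqrt (n:ℝ) * Real.sqrt (n:ℝ) = (n:ℝ) := Real.mul_self_sqrt hn0.le
  set r := Real.sqrt (n:ℝ) with hrdef
  have hr17 : (17:ℝ) ≤ r := by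
    have h := Real.sqrt_le_sqrt hN
    rwa [show (289:ℝ) = 17^2 by norm_num, Real.sqrt_sq (by norm_num)] at h
  have ht1pos : 0 < (n:ℝ)^2 * Real.sin ((n:ℝ)+1) / (2*((n:ℝ)+1)) := by
    apply div_pos (by nlinarith) (by linarith)
  have hlog : Real.log ((n:ℝ)^2 * Real.sin ((n:ℝ)+1) / (2*((n:ℝ)+1))) ≤ 4*r - 4 := by
    have h1 : (n:ℝ)^2 * Real.sin ((n:ℝ)+1) / (2*((n:ℝ)+1)) ≤ (n:ℝ)^2 := by
      rw [div_le_iff₀ (by linarith)]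
      nlinarith [Real.sin_le_one ((n:ℝ)+1)]
    have h2 := Real.log_le_log ht1pos h1
    have h3 : Real.log ((n:ℝ)^2) = Real.log r + Real.log r + (Real.log r + Real.log r) := by
      rw [show (n:ℝ)^2 = (r*r)*(r*r) by rw [hr]; ring]
      rw [Real.log_mul (by positivity) (by positivity),
        Real.log_mul (by positivity) (by positivity)]
    have h5 : Real.log r ≤ r - 1 := Real.log_le_sub_one_of_pos (by linarith)
    linarith
  have hΦb : Φ ((n:ℝ)^2 * Real.sin ((n:ℝ)+1) / (2*((n:ℝ)+1))) ≤ 4*r - 4 :=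
    le_trans (phi_ub Φ hΦ ht1pos) (max_le (by linarith) hlog)
  have hs0 : 0 ≤ Real.sqrt (((n:ℝ)+1)^2 - (n:ℝ)^2 * Real.sin ((n:ℝ)+1) ^ 2) :=
    Real.sqrt_nonneg _
  have hsin1' : Real.sin ((n:ℝ)+1) ≤ 1 := Real.sin_le_one _
  have hsinp : 0 < Real.sin ((n:ℝ)+1) := by linarith
  have hnum : (((n:ℝ)+1) * Real.cos ((n:ℝ)+1) -
      Real.sqrt (((n:ℝ)+1)^2 - (n:ℝ)^2 * Real.sin ((n:ℝ)+1) ^ 2)) ≤ -(((n:ℝ)+1)/4) := by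
    nlinarith
  have hdiv : (((n:ℝ)+1) * Real.cos ((n:ℝ)+1) -
      Real.sqrt (((n:ℝ)+1)^2 - (n:ℝ)^2 * Real.sin ((n:ℝ)+1) ^ 2)) / Real.sin ((n:ℝ)+1) ≤
      -(((n:ℝ)+1)/4) := by
    rw [div_le_iff₀ hsinp]
    have hkey : (0:ℝ) ≤ (((n:ℝ)+1)/4) * (1 - Real.sin ((n:ℝ)+1)) :=
      mul_nonneg (by linarith) (by linarith)
    linarith [hnum, hkey]
  have g2 : Φ ((n : ℝ)^2 * Real.sin ((n : ℝ) + 1) / (2 * ((n : ℝ) + 1))) +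
      (((n : ℝ) + 1) * Real.cos ((n : ℝ) + 1) -
        Real.sqrt (((n : ℝ) + 1)^2 - (n : ℝ)^2 * Real.sin ((n : ℝ) + 1) ^ 2)) /
        Real.sin ((n : ℝ) + 1) < 0 := by
    have hn_r : (n:ℝ) = r * r := hr.symm
    have h17r : 17 * r ≤ r * r := mul_le_mul_of_nonneg_right hr17 (by linarith)
    have hfinal : 4*r - 4 + -(((n:ℝ)+1)/4) < 0 := by rw [hn_r]; linarith
    linarith [hΦb, hdiv]
  refine ⟨g1, g2, ?_⟩
  -- Part 3: IVT
  have hsinpos : ∀ y ∈ Icc (n:ℝ) ((n:ℝ)+1), 0 < Real.sin y := fun y hy =>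
    sin_pos_on hsin hcos hy
  have hcontf : ContinuousOn (fun y : ℝ => Φ ((n : ℝ)^2 * Real.sin y / (2 * y)) +
      (y * Real.cos y - Real.sqrt (y^2 - (n : ℝ)^2 * Real.sin y ^ 2)) / Real.sin y)
      (Icc (n:ℝ) ((n:ℝ)+1)) := by
    intro y hy
    have hys := hsinpos y hy
    have hyp : 0 < y := lt_of_lt_of_le hn0 hy.1
    have hargy : 0 < (n:ℝ)^2 * Real.sin y / (2 * y) :=
      div_pos (mul_pos (pow_pos hn0 2) hys) (by linarith)
    have h1 : ContinuousAt (fun y : ℝ => (n:ℝ)^2 * Real.sin y / (2 * y)) y :=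
      (continuousAt_const.mul Real.continuous_sin.continuousAt).div
        (continuousAt_const.mul continuousAt_id) (by positivity)
    have h2 := ContinuousAt.comp (g := Φ)
      (f := fun y : ℝ => (n:ℝ)^2 * Real.sin y / (2 * y)) (x := y)
      (phi_contAt Φ hΦ hargy) h1
    have h3 : ContinuousAt (fun y : ℝ =>
        (y * Real.cos y - Real.sqrt (y^2 - (n:ℝ)^2 * Real.sin y ^ 2)) / Real.sin y) y := by
      apply ContinuousAt.div _ Real.continuous_sin.continuousAt (ne_of_gt hys)
      exact ((continuous_id.mul Real.continuous_cos).sub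
        (Real.continuous_sqrt.comp ((continuous_pow 2).sub
          (continuous_const.mul (Real.continuous_sin.pow 2))))).continuousAt
    exact (h2.add h3).continuousWithinAt
  have key := intermediate_value_Ioo' (by linarith : (n:ℝ) ≤ (n:ℝ)+1) hcontf
  have h0 : (0:ℝ) ∈ Ioo
      (Φ ((n : ℝ)^2 * Real.sin ((n : ℝ) + 1) / (2 * ((n : ℝ) + 1))) +
        (((n : ℝ) + 1) * Real.cos ((n : ℝ) + 1) -
          Real.sqrt (((n : ℝ) + 1)^2 - (n : ℝ)^2 * Real.sin ((n : ℝ) + 1) ^ 2)) /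
          Real.sin ((n : ℝ) + 1))
      (Φ ((n : ℝ)^2 * Real.sin n / (2 * n)) +
        ((n : ℝ) * Real.cos n -
          Real.sqrt ((n : ℝ)^2 - (n : ℝ)^2 * Real.sin n ^ 2)) / Real.sin n) := ⟨g2, g1⟩
  obtain ⟨y, hy, hfy⟩ := key h0
  exact ⟨y, hy, hfy⟩
end
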